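/- If G is a finite sum of star-based numbers (games of the form *:x for dyadic rationals x), then the normal-play outcome of G equals the misère-play outcome of G + *, and the normal-play outcome of G + * equals the misère-play outcome of G. -/

import Mathlib

namespace SetTheory

universe u

/-- Mathlib's former `SetTheory.PGame` (removed from Mathlib), with its old definitions. -/
inductive PGame : Type (u + 1)
  | mk : ∀ α β : Type u, (α → PGame) → (β → PGame) → PGame

namespace PGame

def LeftMoves : PGame → Type u
  | mk l _ _ _ => l

def RightMoves : PGame → Type u
  | mk _ r _ _ => r

def moveLeft : ∀ g : PGame, LeftMoves g → PGame
  | mk _l _ L _ => L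

def moveRight : ∀ g : PGame, RightMoves g → PGame
  | mk _ _r _ R => R

instance : Zero PGame := ⟨⟨PEmpty, PEmpty, PEmpty.elim, PEmpty.elim⟩⟩

def neg : PGame → PGame
  | ⟨l, r, L, R⟩ => ⟨r, l, fun i => neg (R i), fun i => neg (L i)⟩

instance : Neg PGame := ⟨neg⟩

def addAux (xl xr : Type u) (fL : xl → PGame.{u} → PGame.{u}) (fR : xr → PGame.{u} → PGame.{u}) :
    PGame.{u} → PGame.{u}
  | mk yl yr yL yR =>
    mk (xl ⊕ yl) (xr ⊕ yr)
      (Sum.elim (fun i => fL i (mk yl yr yL yR)) (fun j => addAux xl xr fL fR (yL j)))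
      (Sum.elim (fun i => fR i (mk yl yr yL yR)) (fun j => addAux xl xr fL fR (yR j)))

def add : PGame.{u} → PGame.{u} → PGame.{u}
  | mk xl xr xL xR => addAux xl xr (fun i => add (xL i)) (fun i => add (xR i))

instance : Add PGame.{u} := ⟨add⟩

def star : PGame.{u} := ⟨PUnit, PUnit, fun _ => 0, fun _ => 0⟩

inductive IsOption : PGame → PGame → Prop
  | moveLeft {x : PGame} (i : x.LeftMoves) : IsOption (x.moveLeft i) x
  | moveRight {x : PGame} (i : x.RightMoves) : IsOption (x.moveRight i) x

def Subsequent : PGame → PGame → Prop :=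
  Relation.TransGen IsOption

end PGame

end SetTheory

open SetTheory

namespace Sprigs

/-- Partizan games (in the lowest universe). -/
abbrev PG : Type 1 := PGame.{0}

/-- Winning predicates moving first under misère play:
`(mw G).1` = Left wins moving first; `(mw G).2` = Right wins moving first. -/
def mw : PG → Prop × Prop
  | PGame.mk α β L R =>
    ((IsEmpty α ∨ ∃ i, ¬ (mw (L i)).2), (IsEmpty β ∨ ∃ j, ¬ (mw (R j)).1))

/-- Winning predicates moving first under normal play. -/
def nw : PG → Prop × Prop
  | PGame.mk _ _ L R => ((∃ i, ¬ (nw (L i)).2), (∃ j, ¬ (nw (R j)).1))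

/-- Outcome classes. -/
inductive Outcome : Type
  | L | R | N | P
deriving DecidableEq

/-- The outcome determined by "Left wins moving first" and "Right wins moving first". -/
noncomputable def outcomeOf (wl wr : Prop) : Outcome :=
  haveI := Classical.propDecidable wl
  haveI := Classical.propDecidable wr
  if wl then (if wr then .N else .L) else (if wr then .R else .P)

/-- Misère-play outcome. -/
noncomputable def mo (G : PG) : Outcome := outcomeOf (mw G).1 (mw G).2

/-- Normal-play outcome. -/
noncomputable def no (G : PG) : Outcome := outcomeOf (nw G).1 (nw G).2

/-- Partial order on outcomes: R < P < L and R < N < L, with P, N incomparable. -/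
def Outcome.le : Outcome → Outcome → Prop
  | .R, _ => True
  | _, .L => True
  | a, b => a = b

def Outcome.lt (a b : Outcome) : Prop := Outcome.le a b ∧ a ≠ b

/-- Dicot games: every subposition has moves for both players or neither. -/
def Dicot : PG → Prop
  | PGame.mk α β L R =>
    ((IsEmpty α ∧ IsEmpty β) ∨ (Nonempty α ∧ Nonempty β)) ∧
      (∀ i, Dicot (L i)) ∧ (∀ j, Dicot (R j))

/-- Ordinal sum `G : H`. -/
def ordSum (G : PG) : PG → PGame
  | PGame.mk α β L R =>
    PGame.mk (G.LeftMoves ⊕ α) (G.RightMoves ⊕ β)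
      (Sum.elim G.moveLeft (fun a => ordSum G (L a)))
      (Sum.elim G.moveRight (fun b => ordSum G (R b)))

/-- Canonical form of a natural number as a game. -/
def natGame : ℕ → PGame
  | 0 => PGame.mk PEmpty PEmpty PEmpty.elim PEmpty.elim
  | n + 1 => PGame.mk PUnit PEmpty (fun _ => natGame n) PEmpty.elim

/-- Canonical form of an integer as a game. -/
def intGame (m : ℤ) : PG := if 0 ≤ m then natGame m.toNat else -natGame (-m).toNat

/-- Canonical form of the dyadic rational `m / 2 ^ n` as a game. -/
def dGame : ℕ → ℤ → PGame
  | 0, m => intGame m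
  | n + 1, m =>
    if m % 2 = 0 then dGame n (m / 2)
    else PGame.mk PUnit PUnit (fun _ => dGame n ((m - 1) / 2)) (fun _ => dGame n ((m + 1) / 2))

/-- A rational number is dyadic if its denominator is a power of two. -/
def IsDyadic (q : ℚ) : Prop := ∃ n : ℕ, q.den = 2 ^ n

/-- The canonical-form game of a dyadic rational. -/
def qGame (q : ℚ) : PG := dGame (Nat.log 2 q.den) q.num

/-- The Sprig `* : x` for a dyadic rational `x`. -/
def sprig (q : ℚ) : PG := ordSum PGame.star (qGame q)

/-- The Sprig `* : x̄` where `x̄` is the conjugate of the dyadic rational `x`. -/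
def sprigNeg (q : ℚ) : PG := ordSum PGame.star (-qGame q)

/-- Disjunctive sum of a list of games. -/
def listSum (l : List PG) : PG := l.foldr (· + ·) 0

/-- The position `(X, Y) = Σ_{x ∈ X} *:x + Σ_{y ∈ Y} *:(-y)`. -/
def sprigsGame (X Y : List ℚ) : PG := listSum (X.map sprig ++ Y.map sprigNeg)

/-- The minimum of a nonempty multiset of rationals (0 for the empty multiset). -/
noncomputable def mmin (s : Multiset ℚ) : ℚ :=
  if h : s = 0 then 0 else
    s.toFinset.min' (by rwa [Multiset.toFinset_nonempty])

/-- The edge `ε` computed from the reduced multisets `X' = X \ Y` and `Y' = Y \ X`. -/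
noncomputable def edge (X Y : Multiset ℚ) : ℚ :=
  if X - Y = 0 ∨ Y - X = 0 then 0 else mmin (X - Y) - mmin (Y - X)

/-- The universe `S` of finite sums of Sprigs (and `*`). -/
inductive InS : PG → Prop
  | star : InS PGame.star
  | sprig {q : ℚ} (h : IsDyadic q) : InS (sprig q)
  | sprigNeg {q : ℚ} (h : IsDyadic q) : InS (sprigNeg q)
  | add {a b : PG} : InS a → InS b → InS (a + b)

/-- A universe: a set of games closed under disjunctive sum and followers. -/
def IsUniverse (S : Set PG) : Prop :=
  (∀ a ∈ S, ∀ b ∈ S, a + b ∈ S) ∧ ∀ a ∈ S, ∀ b, PGame.Subsequent b a → b ∈ S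

/-- Finite sums of star-based numbers `*:x` (for dyadic rationals `x`). -/
inductive SumOfStarBased : PG → Prop
  | zero : SumOfStarBased 0
  | addPos {q : ℚ} {G : PG} (h : IsDyadic q) : SumOfStarBased G → SumOfStarBased (sprig q + G)
  | addNeg {q : ℚ} {G : PG} (h : IsDyadic q) : SumOfStarBased G → SumOfStarBased (sprigNeg q + G)

end Sprigs

/-!
In normal play Left wins `H` moving first iff `0 ⧏ H`. By induction on `G`, in misère play she
wins `G` moving first iff `0 ⧏ G + ⋆`, and `G + ⋆` iff `0 ⧏ G` (symmetrically for Right). The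
extra `⋆` pays for the misère rule that a player without moves wins; the induction goes through as
soon as, for every `G ≥ 0` in the class considered, Left either has no move in `G` or can move to
some `G^L` with `G^L + ⋆ ≥ 0`.

For sums of sprigs `*:x` only the signs of the numbers `x` matter, through `*:x + ⋆ ≥ 0` for
`x ≥ 0`. If some `x ≤ 0`, killing `*:x` costs Left at most a `⋆`. Otherwise all `x > 0`; then
`G ≥ 0` or `G + ⋆ ≥ 0` according to the parity of the number of sprigs, and Left either kills a
sprig or moves some `*:x` to `*:x^L` with `x^L ≥ 0`.
-/

namespace SetTheory

universe u

namespace PGame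

theorem moveRecOn {C : PGame.{u} → Prop} (x : PGame.{u})
    (IH : ∀ y : PGame.{u}, (∀ i, C (y.moveLeft i)) → (∀ j, C (y.moveRight j)) → C y) : C x :=
  PGame.rec (motive := C) (fun yl yr yL yR ihL ihR => IH (mk yl yr yL yR) ihL ihR) x

/-! ### Conway's order -/

/-- `(leLF x y).1` is `x ≤ y` and `(leLF x y).2` is `x ⧏ y` (Left wins `y - x` moving first),
defined by simultaneous recursion. -/
noncomputable def leLF (x : PGame.{u}) : PGame.{u} → Prop × Prop :=
  PGame.rec (motive := fun _ => PGame.{u} → Prop × Prop)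
    (fun _ _ _ _ ihL ihR y =>
      PGame.rec (motive := fun _ => Prop × Prop)
        (fun yl yr yL yR jhL jhR =>
          ((∀ i, (ihL i (mk yl yr yL yR)).2) ∧ (∀ j, (jhR j).2),
            (∃ i, (jhL i).1) ∨ (∃ j, (ihR j (mk yl yr yL yR)).1))) y) x

instance : LE PGame.{u} := ⟨fun x y => (leLF x y).1⟩

def LF (x y : PGame.{u}) : Prop := (leLF x y).2

infixl:50 " ⧏ " => LF

theorem le_def {x y : PGame.{u}} :
    x ≤ y ↔ (∀ i, x.moveLeft i ⧏ y) ∧ ∀ j, x ⧏ y.moveRight j := by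
  cases x; cases y; exact Iff.rfl

theorem lf_def {x y : PGame.{u}} :
    x ⧏ y ↔ (∃ i, x ≤ y.moveLeft i) ∨ ∃ j, x.moveRight j ≤ y := by
  cases x; cases y; exact Iff.rfl

theorem not_le_and_not_lf (x y : PGame.{u}) : (¬ x ≤ y ↔ y ⧏ x) ∧ (¬ x ⧏ y ↔ y ≤ x) := by
  induction x using moveRecOn generalizing y with
  | _ x IHxl IHxr =>
  induction y using moveRecOn with
  | _ y IHyl IHyr =>
  constructor
  · rw [le_def, lf_def, not_and_or, not_forall, not_forall]
    exact or_congr (exists_congr fun i => (IHxl i y).2) (exists_congr fun j => (IHyr j).2)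
  · rw [lf_def, le_def, not_or, not_exists, not_exists]
    exact and_congr (forall_congr' fun i => (IHyl i).1) (forall_congr' fun j => (IHxr j y).1)

protected theorem not_le {x y : PGame.{u}} : ¬ x ≤ y ↔ y ⧏ x := (not_le_and_not_lf x y).1

protected theorem not_lf {x y : PGame.{u}} : ¬ x ⧏ y ↔ y ≤ x := (not_le_and_not_lf x y).2

theorem le_trans_aux {x y z : PGame.{u}}
    (h₁ : ∀ i, y ≤ z → z ≤ x.moveLeft i → y ≤ x.moveLeft i)
    (h₂ : ∀ j, z.moveRight j ≤ x → x ≤ y → z.moveRight j ≤ y) (hxy : x ≤ y) (hyz : y ≤ z) :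
    x ≤ z :=
  le_def.2 ⟨fun i => PGame.not_le.1 fun h => PGame.not_lf.2 (h₁ i hyz h) ((le_def.1 hxy).1 i),
    fun j => PGame.not_le.1 fun h => PGame.not_lf.2 (h₂ j h hxy) ((le_def.1 hyz).2 j)⟩

instance : Preorder PGame.{u} where
  le_refl x := by
    induction x using moveRecOn with
    | _ x IHl IHr =>
    exact le_def.2 ⟨fun i => lf_def.2 (Or.inl ⟨i, IHl i⟩), fun j => lf_def.2 (Or.inr ⟨j, IHr j⟩)⟩
  le_trans x y z := by
    suffices (x ≤ y → y ≤ z → x ≤ z) ∧ (y ≤ z → z ≤ x → y ≤ x) ∧ (z ≤ x → x ≤ y → z ≤ y) from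
      this.1
    induction x using moveRecOn generalizing y z with
    | _ x IHxl IHxr =>
    induction y using moveRecOn generalizing z with
    | _ y IHyl IHyr =>
    induction z using moveRecOn with
    | _ z IHzl IHzr =>
    exact ⟨le_trans_aux (fun i => (IHxl i y z).2.1) (fun j => (IHzr j).2.2),
      le_trans_aux (fun i => (IHyl i z).2.2) (fun j => (IHxr j y z).1),
      le_trans_aux (fun i => (IHzl i).1) (fun j => (IHyr j z).2.1)⟩

theorem lt_iff_le_and_lf {x y : PGame.{u}} : x < y ↔ x ≤ y ∧ x ⧏ y := by
  rw [lt_iff_le_not_ge, PGame.not_le]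

theorem lf_of_le_of_lf {x y z : PGame.{u}} (h₁ : x ≤ y) (h₂ : y ⧏ z) : x ⧏ z :=
  PGame.not_le.1 fun h => PGame.not_lf.2 (h.trans h₁) h₂

theorem lf_of_lf_of_le {x y z : PGame.{u}} (h₁ : x ⧏ y) (h₂ : y ≤ z) : x ⧏ z :=
  PGame.not_le.1 fun h => PGame.not_lf.2 (h₂.trans h) h₁

theorem zero_le {x : PGame.{u}} : 0 ≤ x ↔ ∀ j, 0 ⧏ x.moveRight j := by
  rw [le_def]; exact ⟨fun h => h.2, fun h => ⟨fun i => PEmpty.elim i, h⟩⟩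

theorem le_zero {x : PGame.{u}} : x ≤ 0 ↔ ∀ i, x.moveLeft i ⧏ 0 := by
  rw [le_def]; exact ⟨fun h => h.1, fun h => ⟨h, fun j => PEmpty.elim j⟩⟩

theorem zero_lf {x : PGame.{u}} : 0 ⧏ x ↔ ∃ i, 0 ≤ x.moveLeft i := by
  rw [lf_def]; exact ⟨fun h => h.resolve_right fun ⟨j, _⟩ => PEmpty.elim j, Or.inl⟩

theorem lf_zero {x : PGame.{u}} : x ⧏ 0 ↔ ∃ j, x.moveRight j ≤ 0 := by
  rw [lf_def]; exact ⟨fun h => h.resolve_left fun ⟨i, _⟩ => PEmpty.elim i, Or.inr⟩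

instance : NegZeroClass PGame.{u} where
  neg_zero := by
    show mk _ _ _ _ = mk _ _ _ _
    congr 1 <;> funext i <;> exact PEmpty.elim i

theorem neg_le_lf_neg_iff (x y : PGame.{u}) : (-y ≤ -x ↔ x ≤ y) ∧ (-y ⧏ -x ↔ x ⧏ y) := by
  induction x using moveRecOn generalizing y with
  | _ x IHxl IHxr =>
  induction y using moveRecOn with
  | _ y IHyl IHyr =>
  obtain ⟨xl, xr, xL, xR⟩ := x
  obtain ⟨yl, yr, yL, yR⟩ := y
  constructor
  · rw [le_def, le_def]
    exact ⟨fun ⟨h1, h2⟩ => ⟨fun i => (IHxl i _).2.1 (h2 i), fun j => (IHyr j).2.1 (h1 j)⟩,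
      fun ⟨h1, h2⟩ => ⟨fun j => (IHyr j).2.2 (h2 j), fun i => (IHxl i _).2.2 (h1 i)⟩⟩
  · rw [lf_def, lf_def]
    exact ⟨fun h => h.elim (fun ⟨i, hi⟩ => Or.inr ⟨i, (IHxr i _).1.1 hi⟩)
        (fun ⟨j, hj⟩ => Or.inl ⟨j, (IHyl j).1.1 hj⟩),
      fun h => h.elim (fun ⟨i, hi⟩ => Or.inr ⟨i, (IHyl i).1.2 hi⟩)
        (fun ⟨j, hj⟩ => Or.inl ⟨j, (IHxr j _).1.2 hj⟩)⟩

theorem zero_le_neg_iff {x : PGame.{u}} : 0 ≤ -x ↔ x ≤ 0 := by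
  simpa using (neg_le_lf_neg_iff x 0).1

theorem neg_le_zero_iff {x : PGame.{u}} : -x ≤ 0 ↔ 0 ≤ x := by
  simpa using (neg_le_lf_neg_iff 0 x).1

theorem zero_lf_neg_iff {x : PGame.{u}} : 0 ⧏ -x ↔ x ⧏ 0 := by
  simpa using (neg_le_lf_neg_iff x 0).2

theorem neg_lf_zero_iff {x : PGame.{u}} : -x ⧏ 0 ↔ 0 ⧏ x := by
  simpa using (neg_le_lf_neg_iff 0 x).2

theorem neg_star : -star.{u} = star := by
  show mk _ _ (fun _ => -0) (fun _ => -0) = _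
  rw [neg_zero]; rfl

theorem neg_add (x y : PGame.{u}) : -(x + y) = -x + -y := by
  induction x using moveRecOn generalizing y with
  | _ x IHxl IHxr =>
  induction y using moveRecOn with
  | _ y IHyl IHyr =>
  obtain ⟨xl, xr, xL, xR⟩ := x
  obtain ⟨yl, yr, yL, yR⟩ := y
  show mk _ _ _ _ = mk _ _ _ _
  congr 1 <;> funext k <;> rcases k with k | k
  exacts [IHxr k _, IHyr k, IHxl k _, IHyl k]

/-! ### Sums and the group of games -/

theorem exists_leftMoves_add {x y : PGame.{u}} (p : PGame.{u} → Prop) :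
    (∃ k, p ((x + y).moveLeft k)) ↔ (∃ i, p (x.moveLeft i + y)) ∨ ∃ j, p (x + y.moveLeft j) := by
  cases x; cases y; exact Sum.exists

theorem exists_rightMoves_add {x y : PGame.{u}} (p : PGame.{u} → Prop) :
    (∃ k, p ((x + y).moveRight k)) ↔ (∃ i, p (x.moveRight i + y)) ∨ ∃ j, p (x + y.moveRight j) := by
  cases x; cases y; exact Sum.exists

theorem forall_leftMoves_add {x y : PGame.{u}} (p : PGame.{u} → Prop) :
    (∀ k, p ((x + y).moveLeft k)) ↔ (∀ i, p (x.moveLeft i + y)) ∧ ∀ j, p (x + y.moveLeft j) := by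
  cases x; cases y; exact Sum.forall

theorem forall_rightMoves_add {x y : PGame.{u}} (p : PGame.{u} → Prop) :
    (∀ k, p ((x + y).moveRight k)) ↔ (∀ i, p (x.moveRight i + y)) ∧ ∀ j, p (x + y.moveRight j) := by
  cases x; cases y; exact Sum.forall

instance : IsEmpty (0 : PGame.{u}).LeftMoves := inferInstanceAs (IsEmpty PEmpty)

instance : IsEmpty (0 : PGame.{u}).RightMoves := inferInstanceAs (IsEmpty PEmpty)

theorem exists_leftMoves_star (p : PGame.{u} → Prop) : (∃ i, p (star.moveLeft i)) ↔ p 0 :=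
  ⟨fun ⟨_, h⟩ => h, fun h => ⟨PUnit.unit, h⟩⟩

theorem exists_rightMoves_star (p : PGame.{u} → Prop) : (∃ j, p (star.moveRight j)) ↔ p 0 :=
  ⟨fun ⟨_, h⟩ => h, fun h => ⟨PUnit.unit, h⟩⟩

theorem isEmpty_leftMoves_add {x y : PGame.{u}} :
    IsEmpty (x + y).LeftMoves ↔ IsEmpty x.LeftMoves ∧ IsEmpty y.LeftMoves := by
  cases x; cases y; exact isEmpty_sum

theorem isEmpty_rightMoves_add {x y : PGame.{u}} :
    IsEmpty (x + y).RightMoves ↔ IsEmpty x.RightMoves ∧ IsEmpty y.RightMoves := by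
  cases x; cases y; exact isEmpty_sum

theorem add_le_lf_add_right (x y z : PGame.{u}) :
    (x ≤ y → x + z ≤ y + z) ∧ (x ⧏ y → x + z ⧏ y + z) := by
  induction x using moveRecOn generalizing y z with
  | _ x IHxl IHxr =>
  induction y using moveRecOn generalizing z with
  | _ y IHyl IHyr =>
  induction z using moveRecOn with
  | _ z IHzl IHzr =>
  constructor
  · intro h
    refine le_def.2 ⟨(forall_leftMoves_add (· ⧏ y + z)).2 ⟨fun i => ?_, fun j => ?_⟩,
      (forall_rightMoves_add (x + z ⧏ ·)).2 ⟨fun i => ?_, fun j => ?_⟩⟩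
    · exact (IHxl i y z).2 ((le_def.1 h).1 i)
    · exact lf_of_le_of_lf ((IHzl j).1 h)
        (lf_def.2 (Or.inl ((exists_leftMoves_add (y + z.moveLeft j ≤ ·)).2 (Or.inr ⟨j, le_rfl⟩))))
    · exact (IHyr i z).2 ((le_def.1 h).2 i)
    · exact lf_of_lf_of_le
        (lf_def.2 (Or.inr ((exists_rightMoves_add (· ≤ x + z.moveRight j)).2 (Or.inr ⟨j, le_rfl⟩))))
        ((IHzr j).1 h)
  · intro h
    rcases lf_def.1 h with ⟨i, hi⟩ | ⟨j, hj⟩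
    · exact lf_def.2 (Or.inl ((exists_leftMoves_add (x + z ≤ ·)).2
        (Or.inl ⟨i, (IHyl i z).1 hi⟩)))
    · exact lf_def.2 (Or.inr ((exists_rightMoves_add (· ≤ y + z)).2
        (Or.inl ⟨j, (IHxr j y z).1 hj⟩)))

instance setoid : Setoid PGame.{u} :=
  ⟨fun x y => x ≤ y ∧ y ≤ x,
    ⟨fun _ => ⟨le_rfl, le_rfl⟩, fun h => ⟨h.2, h.1⟩,
      fun h₁ h₂ => ⟨h₁.1.trans h₂.1, h₂.2.trans h₁.2⟩⟩⟩

theorem le_congr_left {x₁ x₂ y : PGame.{u}} (h : x₁ ≈ x₂) : x₁ ≤ y ↔ x₂ ≤ y :=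
  ⟨h.2.trans, h.1.trans⟩

theorem le_congr_right {x y₁ y₂ : PGame.{u}} (h : y₁ ≈ y₂) : x ≤ y₁ ↔ x ≤ y₂ :=
  ⟨(·.trans h.1), (·.trans h.2)⟩

theorem equiv_of_moves {x y : PGame.{u}} (L : x.LeftMoves ≃ y.LeftMoves)
    (R : x.RightMoves ≃ y.RightMoves) (hL : ∀ i, x.moveLeft i ≈ y.moveLeft (L i))
    (hR : ∀ j, x.moveRight j ≈ y.moveRight (R j)) : x ≈ y := by
  constructor
  · refine le_def.2 ⟨fun i => lf_def.2 (Or.inl ⟨L i, (hL i).1⟩), fun j => ?_⟩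
    obtain ⟨j, rfl⟩ := R.surjective j
    exact lf_def.2 (Or.inr ⟨j, (hR j).1⟩)
  · refine le_def.2 ⟨fun i => ?_, fun j => lf_def.2 (Or.inr ⟨R j, (hR j).2⟩)⟩
    obtain ⟨i, rfl⟩ := L.surjective i
    exact lf_def.2 (Or.inl ⟨i, (hL i).2⟩)

theorem add_comm_equiv (x y : PGame.{u}) : x + y ≈ y + x := by
  induction x using moveRecOn generalizing y with
  | _ x IHxl IHxr =>
  induction y using moveRecOn with
  | _ y IHyl IHyr =>
  obtain ⟨xl, xr, xL, xR⟩ := x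
  obtain ⟨yl, yr, yL, yR⟩ := y
  refine equiv_of_moves (Equiv.sumComm _ _) (Equiv.sumComm _ _) ?_ ?_
  · rintro (i | i)
    exacts [IHxl i _, IHyl i]
  · rintro (j | j)
    exacts [IHxr j _, IHyr j]

theorem add_assoc_equiv (x y z : PGame.{u}) : x + y + z ≈ x + (y + z) := by
  induction x using moveRecOn generalizing y z with
  | _ x IHxl IHxr =>
  induction y using moveRecOn generalizing z with
  | _ y IHyl IHyr =>
  induction z using moveRecOn with
  | _ z IHzl IHzr =>
  obtain ⟨xl, xr, xL, xR⟩ := x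
  obtain ⟨yl, yr, yL, yR⟩ := y
  obtain ⟨zl, zr, zL, zR⟩ := z
  refine equiv_of_moves (Equiv.sumAssoc _ _ _) (Equiv.sumAssoc _ _ _) ?_ ?_
  · rintro ((i | i) | i)
    exacts [IHxl i _ _, IHyl i _, IHzl i]
  · rintro ((j | j) | j)
    exacts [IHxr j _ _, IHyr j _, IHzr j]

theorem add_zero_equiv (x : PGame.{u}) : x + 0 ≈ x := by
  induction x using moveRecOn with
  | _ x IHl IHr =>
  obtain ⟨xl, xr, xL, xR⟩ := x
  refine equiv_of_moves (Equiv.sumEmpty xl PEmpty) (Equiv.sumEmpty xr PEmpty) ?_ ?_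
  · rintro (i | i)
    exacts [IHl i, i.elim]
  · rintro (j | j)
    exacts [IHr j, j.elim]

theorem zero_add_equiv (x : PGame.{u}) : 0 + x ≈ x :=
  Setoid.trans (add_comm_equiv 0 x) (add_zero_equiv x)

theorem neg_add_cancel_equiv (x : PGame.{u}) : -x + x ≈ 0 := by
  induction x using moveRecOn with
  | _ x IHl IHr =>
  obtain ⟨xl, xr, xL, xR⟩ := x
  constructor
  · refine le_zero.2 ((forall_leftMoves_add (· ⧏ 0)).2 ⟨fun i => ?_, fun i => ?_⟩)
    · exact lf_zero.2 ((exists_rightMoves_add (· ≤ 0)).2 (Or.inr ⟨i, (IHr i).1⟩))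
    · exact lf_zero.2 ((exists_rightMoves_add (· ≤ 0)).2 (Or.inl ⟨i, (IHl i).1⟩))
  · refine zero_le.2 ((forall_rightMoves_add (0 ⧏ ·)).2 ⟨fun j => ?_, fun j => ?_⟩)
    · exact zero_lf.2 ((exists_leftMoves_add (0 ≤ ·)).2 (Or.inr ⟨j, (IHl j).2⟩))
    · exact zero_lf.2 ((exists_leftMoves_add (0 ≤ ·)).2 (Or.inl ⟨j, (IHr j).2⟩))

theorem add_le_add_right' {x y : PGame.{u}} (h : x ≤ y) (z : PGame.{u}) : x + z ≤ y + z :=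
  (add_le_lf_add_right x y z).1 h

theorem add_le_add_left' {x y : PGame.{u}} (h : x ≤ y) (z : PGame.{u}) : z + x ≤ z + y :=
  (add_comm_equiv z x).1.trans ((add_le_add_right' h z).trans (add_comm_equiv y z).1)

theorem add_congr {a₁ a₂ : PGame.{u}} (ha : a₁ ≈ a₂) {b₁ b₂ : PGame.{u}} (hb : b₁ ≈ b₂) :
    a₁ + b₁ ≈ a₂ + b₂ :=
  ⟨(add_le_add_right' ha.1 _).trans (add_le_add_left' hb.1 _),
    (add_le_add_right' ha.2 _).trans (add_le_add_left' hb.2 _)⟩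

theorem neg_congr {a b : PGame.{u}} (h : a ≈ b) : -a ≈ -b :=
  ⟨(neg_le_lf_neg_iff b a).1.2 h.2, (neg_le_lf_neg_iff a b).1.2 h.1⟩

end PGame

abbrev Game : Type (u + 1) := Quotient PGame.setoid.{u}

namespace Game

instance : Zero Game.{u} := ⟨⟦0⟧⟩

instance : Add Game.{u} := ⟨Quotient.map₂ (· + ·) @PGame.add_congr⟩

instance : Neg Game.{u} := ⟨Quotient.map (-·) @PGame.neg_congr⟩

instance : PartialOrder Game.{u} where
  le := Quotient.lift₂ (s₁ := PGame.setoid) (s₂ := PGame.setoid) (· ≤ ·) fun _ _ _ _ ha hb =>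
    propext ⟨fun h => ha.2.trans (h.trans hb.1), fun h => ha.1.trans (h.trans hb.2)⟩
  lt := Quotient.lift₂ (s₁ := PGame.setoid) (s₂ := PGame.setoid) (· < ·) fun _ _ _ _ ha hb =>
    propext ⟨fun h => lt_of_le_of_lt ha.2 (lt_of_lt_of_le h hb.1),
      fun h => lt_of_le_of_lt ha.1 (lt_of_lt_of_le h hb.2)⟩
  lt_iff_le_not_ge := by rintro ⟨x⟩ ⟨y⟩; exact lt_iff_le_not_ge
  le_refl := by rintro ⟨x⟩; exact le_refl x
  le_trans := by rintro ⟨x⟩ ⟨y⟩ ⟨z⟩; exact le_trans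
  le_antisymm := by rintro ⟨x⟩ ⟨y⟩ h₁ h₂; exact Quotient.sound ⟨h₁, h₂⟩

-- These take precedence over Mathlib's generic order on quotients, which is not Conway's.
instance : Preorder Game.{u} := PartialOrder.toPreorder

instance : LE Game.{u} := Preorder.toLE

instance : LT Game.{u} := Preorder.toLT

instance : AddCommGroup Game.{u} where
  add := (· + ·)
  zero := 0
  neg := Neg.neg
  add_assoc := by rintro ⟨x⟩ ⟨y⟩ ⟨z⟩; exact Quotient.sound (PGame.add_assoc_equiv x y z)
  zero_add := by rintro ⟨x⟩; exact Quotient.sound (PGame.zero_add_equiv x)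
  add_zero := by rintro ⟨x⟩; exact Quotient.sound (PGame.add_zero_equiv x)
  add_comm := by rintro ⟨x⟩ ⟨y⟩; exact Quotient.sound (PGame.add_comm_equiv x y)
  neg_add_cancel := by rintro ⟨x⟩; exact Quotient.sound (PGame.neg_add_cancel_equiv x)
  nsmul := nsmulRec
  zsmul := zsmulRec

instance : IsOrderedAddMonoid Game.{u} where
  add_le_add_left := by
    rintro ⟨a⟩ ⟨b⟩ h ⟨c⟩
    exact PGame.add_le_add_right' (x := a) (y := b) h c

end Game

namespace PGame

theorem le_iff_game_le {x y : PGame.{u}} : x ≤ y ↔ (⟦x⟧ : Game) ≤ ⟦y⟧ := Iff.rfl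

theorem quot_add (x y : PGame.{u}) : (⟦x + y⟧ : Game) = ⟦x⟧ + ⟦y⟧ := rfl

theorem quot_zero : (⟦0⟧ : Game.{u}) = 0 := rfl

theorem quot_star_add_star : (⟦star⟧ : Game.{u}) + ⟦star⟧ = 0 := by
  conv_lhs => enter [1]; rw [← neg_star]
  exact neg_add_cancel (⟦star⟧ : Game)

end PGame

end SetTheory

namespace Sprigs

open PGame

local notation "⋆" => PGame.star

/-! ### Misère play versus normal play -/

theorem mw_fst_iff (x : PG) :
    (mw x).1 ↔ IsEmpty x.LeftMoves ∨ ∃ i, ¬ (mw (x.moveLeft i)).2 := by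
  cases x; rw [mw]; rfl

theorem mw_snd_iff (x : PG) :
    (mw x).2 ↔ IsEmpty x.RightMoves ∨ ∃ j, ¬ (mw (x.moveRight j)).1 := by
  cases x; rw [mw]; rfl

theorem mw_add_zero (x : PG) : mw (x + 0) = mw x := by
  induction x using moveRecOn with
  | _ x ihL ihR =>
  ext
  · rw [mw_fst_iff, mw_fst_iff, isEmpty_leftMoves_add, exists_leftMoves_add fun z => ¬ (mw z).2]
    simp only [ihL, IsEmpty.exists_iff, or_false, and_iff_left (inferInstance : IsEmpty _)]
  · rw [mw_snd_iff, mw_snd_iff, isEmpty_rightMoves_add, exists_rightMoves_add fun z => ¬ (mw z).1]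
    simp only [ihR, IsEmpty.exists_iff, or_false, and_iff_left (inferInstance : IsEmpty _)]

theorem nw_iff (x : PG) : ((nw x).1 ↔ 0 ⧏ x) ∧ ((nw x).2 ↔ x ⧏ 0) := by
  induction x using moveRecOn with
  | _ x ihL ihR =>
  cases x
  rw [PGame.zero_lf, PGame.lf_zero, nw]
  exact ⟨exists_congr fun i => (not_congr (ihL i).2).trans PGame.not_lf,
    exists_congr fun j => (not_congr (ihR j).1).trans PGame.not_lf⟩

theorem zero_lf_of_zero_le_add_star {x : PG} (h : 0 ≤ x + ⋆) : 0 ⧏ x :=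
  lf_of_lf_of_le (((PGame.zero_le.trans (forall_rightMoves_add _)).1 h).2 PUnit.unit)
    (add_zero_equiv x).1

theorem lf_zero_of_add_star_le_zero {x : PG} (h : x + ⋆ ≤ 0) : x ⧏ 0 :=
  lf_of_le_of_lf (add_zero_equiv x).2
    (((PGame.le_zero.trans (forall_leftMoves_add (· ⧏ 0))).1 h).2 PUnit.unit)

/-- Conditions on a class of games under which misère play of `G` is normal play of `G + ⋆`
(`StarShiftClass.mw_iff`). -/
structure StarShiftClass (C : PG → Prop) : Prop where
  moveLeft_mem : ∀ G, C G → ∀ i, C (G.moveLeft i)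
  moveRight_mem : ∀ G, C G → ∀ j, C (G.moveRight j)
  neg_mem : ∀ G, C G → C (-G)
  zero_le_of_isEmpty : ∀ G, C G → IsEmpty G.LeftMoves → 0 ≤ G
  exists_zero_le_moveLeft_add_star :
    ∀ G, C G → 0 ≤ G → IsEmpty G.LeftMoves ∨ ∃ i, 0 ≤ G.moveLeft i + ⋆

namespace StarShiftClass

variable {C : PG → Prop}

theorem le_zero_of_isEmpty (hC : StarShiftClass C) {G : PG} (hG : C G)
    (h : IsEmpty G.RightMoves) : G ≤ 0 := by
  have := hC.zero_le_of_isEmpty (-G) (hC.neg_mem G hG)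
  cases G
  exact zero_le_neg_iff.1 (this h)

theorem exists_moveRight_add_star_le_zero (hC : StarShiftClass C) {G : PG} (hG : C G)
    (h : G ≤ 0) : IsEmpty G.RightMoves ∨ ∃ j, G.moveRight j + ⋆ ≤ 0 := by
  have := hC.exists_zero_le_moveLeft_add_star (-G) (hC.neg_mem G hG) (zero_le_neg_iff.2 h)
  cases G
  refine this.imp id fun ⟨j, hj⟩ => ⟨j, zero_le_neg_iff.1 ?_⟩
  rw [PGame.neg_add, neg_star]
  exact hj

theorem mw_iff (hC : StarShiftClass C) (G : PG) (hG : C G) :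
    ((mw G).1 ↔ 0 ⧏ G + ⋆) ∧ ((mw G).2 ↔ G + ⋆ ⧏ 0) := by
  induction G using moveRecOn with
  | _ G ihL ihR =>
  have hL : ∀ i, ¬ (mw (G.moveLeft i)).2 ↔ 0 ≤ G.moveLeft i + ⋆ := fun i =>
    (not_congr (ihL i (hC.moveLeft_mem G hG i)).2).trans PGame.not_lf
  have hR : ∀ j, ¬ (mw (G.moveRight j)).1 ↔ G.moveRight j + ⋆ ≤ 0 := fun j =>
    (not_congr (ihR j (hC.moveRight_mem G hG j)).1).trans PGame.not_lf
  have hempty := hC.zero_le_of_isEmpty G hG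
  have hempty' := hC.le_zero_of_isEmpty hG
  have hmove := hC.exists_zero_le_moveLeft_add_star G hG
  have hmove' := hC.exists_moveRight_add_star_le_zero hG
  constructor
  · rw [mw_fst_iff, PGame.zero_lf, exists_leftMoves_add (0 ≤ ·)]
    simp only [hL]
    rw [exists_leftMoves_star (0 ≤ G + ·), le_congr_right (add_zero_equiv G)]
    tauto
  · rw [mw_snd_iff, PGame.lf_zero, exists_rightMoves_add (· ≤ 0)]
    simp only [hR]
    rw [exists_rightMoves_star (G + · ≤ 0), le_congr_left (add_zero_equiv G)]
    tauto

theorem mw_add_star_iff (hC : StarShiftClass C) (G : PG) (hG : C G) :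
    ((mw (G + ⋆)).1 ↔ 0 ⧏ G) ∧ ((mw (G + ⋆)).2 ↔ G ⧏ 0) := by
  induction G using moveRecOn with
  | _ G ihL ihR =>
  have hL : ∀ i, ¬ (mw (G.moveLeft i + ⋆)).2 ↔ 0 ≤ G.moveLeft i := fun i =>
    (not_congr (ihL i (hC.moveLeft_mem G hG i)).2).trans PGame.not_lf
  have hR : ∀ j, ¬ (mw (G.moveRight j + ⋆)).1 ↔ G.moveRight j ≤ 0 := fun j =>
    (not_congr (ihR j (hC.moveRight_mem G hG j)).1).trans PGame.not_lf
  obtain ⟨hG₁, hG₂⟩ := hC.mw_iff G hG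
  constructor
  · have hne : ¬ IsEmpty (G + ⋆).LeftMoves := fun h =>
      (isEmpty_leftMoves_add.1 h).2.false PUnit.unit
    rw [mw_fst_iff, or_iff_right hne, exists_leftMoves_add fun z => ¬ (mw z).2, PGame.zero_lf]
    simp only [hL]
    rw [exists_leftMoves_star fun z => ¬ (mw (G + z)).2, mw_add_zero, hG₂, PGame.not_lf]
    exact ⟨fun h => h.elim id (PGame.zero_lf.1 ∘ zero_lf_of_zero_le_add_star), Or.inl⟩
  · have hne : ¬ IsEmpty (G + ⋆).RightMoves := fun h =>
      (isEmpty_rightMoves_add.1 h).2.false PUnit.unit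
    rw [mw_snd_iff, or_iff_right hne, exists_rightMoves_add fun z => ¬ (mw z).1, PGame.lf_zero]
    simp only [hR]
    rw [exists_rightMoves_star fun z => ¬ (mw (G + z)).1, mw_add_zero, hG₁, PGame.not_lf]
    exact ⟨fun h => h.elim id (PGame.lf_zero.1 ∘ lf_zero_of_add_star_le_zero), Or.inl⟩

end StarShiftClass

/-! ### Sprigs -/

theorem exists_leftMoves_ordSum_star {d : PG} (p : PG → Prop) :
    (∃ k, p ((ordSum ⋆ d).moveLeft k)) ↔ p 0 ∨ ∃ i, p (ordSum ⋆ (d.moveLeft i)) := by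
  cases d; exact Sum.exists.trans (or_congr_left (exists_leftMoves_star p))

theorem forall_leftMoves_ordSum_star {d : PG} (p : PG → Prop) :
    (∀ k, p ((ordSum ⋆ d).moveLeft k)) ↔ p 0 ∧ ∀ i, p (ordSum ⋆ (d.moveLeft i)) := by
  cases d; exact Sum.forall.trans (and_congr_left fun _ => ⟨fun h => h (), fun h _ => h⟩)

theorem forall_rightMoves_ordSum_star {d : PG} (p : PG → Prop) :
    (∀ k, p ((ordSum ⋆ d).moveRight k)) ↔ p 0 ∧ ∀ j, p (ordSum ⋆ (d.moveRight j)) := by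
  cases d; exact Sum.forall.trans (and_congr_left fun _ => ⟨fun h => h (), fun h _ => h⟩)

theorem neg_ordSum_star (d : PG) : -ordSum ⋆ d = ordSum ⋆ (-d) := by
  induction d using moveRecOn with
  | _ d ihL ihR =>
  obtain ⟨γ, δ, L, R⟩ := d
  show mk _ _ _ _ = mk _ _ _ _
  congr 1 <;> funext k <;> rcases k with _ | k
  exacts [neg_zero, ihR k, neg_zero, ihL k]

/-- The properties of the numbers `d`, hereditary under options, on which the analysis of the
sprigs `*:d` relies. -/
inductive SignStable : PG → Prop
  | intro {x : PG} (moveLeft : ∀ i, SignStable (x.moveLeft i))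
      (moveRight : ∀ j, SignStable (x.moveRight j)) (total : 0 ≤ x ∨ x ≤ 0)
      (zero_lf_moveRight : 0 ≤ x → ∀ j, 0 ⧏ x.moveRight j)
      (moveLeft_lf_zero : x ≤ 0 → ∀ i, x.moveLeft i ⧏ 0) : SignStable x

namespace SignStable

theorem moveLeft {x : PG} (h : SignStable x) (i : x.LeftMoves) : SignStable (x.moveLeft i) :=
  match h with | intro hL _ _ _ _ => hL i

theorem moveRight {x : PG} (h : SignStable x) (j : x.RightMoves) :
    SignStable (x.moveRight j) :=
  match h with | intro _ hR _ _ _ => hR j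

theorem total {x : PG} (h : SignStable x) : 0 ≤ x ∨ x ≤ 0 :=
  match h with | intro _ _ h _ _ => h

theorem zero_lf_moveRight {x : PG} (h : SignStable x) (hx : 0 ≤ x) (j : x.RightMoves) :
    0 ⧏ x.moveRight j :=
  match h with | intro _ _ _ h _ => h hx j

theorem moveLeft_lf_zero {x : PG} (h : SignStable x) (hx : x ≤ 0) (i : x.LeftMoves) :
    x.moveLeft i ⧏ 0 :=
  match h with | intro _ _ _ _ h => h hx i

theorem neg {x : PG} (h : SignStable x) : SignStable (-x) := by
  induction x using moveRecOn with
  | _ x ihL ihR =>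
  obtain ⟨α, β, L, R⟩ := x
  refine intro (fun j => ihR j (h.moveRight j)) (fun i => ihL i (h.moveLeft i))
    (h.total.symm.imp zero_le_neg_iff.2 neg_le_zero_iff.2) (fun hx i => ?_) (fun hx j => ?_)
  · exact zero_lf_neg_iff.2 (h.moveLeft_lf_zero (zero_le_neg_iff.1 hx) i)
  · exact neg_lf_zero_iff.2 (h.zero_lf_moveRight (neg_le_zero_iff.1 hx) j)

end SignStable

theorem zero_le_lf_ordSum_star_add_star {d : PG} (hd : SignStable d) :
    (0 ≤ d → 0 ≤ ordSum ⋆ d + ⋆) ∧ (0 ⧏ d → 0 ⧏ ordSum ⋆ d + ⋆) := by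
  induction d using moveRecOn with
  | _ d ihL ihR =>
  -- Left answers a kill by a kill, and `d → d^R` by moving to some `d^RL ≥ 0`.
  refine ⟨fun h => PGame.zero_le.2 ((forall_rightMoves_add (0 ⧏ ·)).2 ⟨?_, fun _ => ?_⟩),
    fun h => ?_⟩
  · refine (forall_rightMoves_ordSum_star (0 ⧏ · + ⋆)).2 ⟨?_, fun j => ?_⟩
    · exact PGame.zero_lf.2 ((exists_leftMoves_add (0 ≤ ·)).2 (Or.inr ⟨(), (add_zero_equiv 0).2⟩))
    · exact (ihR j (hd.moveRight j)).2 (hd.zero_lf_moveRight h j)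
  · refine PGame.zero_lf.2 ((exists_leftMoves_add (0 ≤ ·)).2 (Or.inl ?_))
    exact (exists_leftMoves_ordSum_star (0 ≤ · + 0)).2 (Or.inl (add_zero_equiv 0).2)
  · obtain ⟨i, hi⟩ := PGame.zero_lf.1 h
    refine PGame.zero_lf.2 ((exists_leftMoves_add (0 ≤ ·)).2 (Or.inl ?_))
    exact (exists_leftMoves_ordSum_star (0 ≤ · + ⋆)).2 (Or.inr ⟨i, (ihL i (hd.moveLeft i)).1 hi⟩)

theorem zero_le_ordSum_star_add_star {d : PG} (hd : SignStable d) (h : 0 ≤ d) :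
    0 ≤ ordSum ⋆ d + ⋆ :=
  (zero_le_lf_ordSum_star_add_star hd).1 h

theorem ordSum_star_add_star_le_zero {d : PG} (hd : SignStable d) (h : d ≤ 0) :
    ordSum ⋆ d + ⋆ ≤ 0 := by
  rw [← zero_le_neg_iff, PGame.neg_add, neg_star, neg_ordSum_star]
  exact zero_le_ordSum_star_add_star hd.neg (zero_le_neg_iff.2 h)

theorem natGame_nonneg (k : ℕ) : 0 ≤ (natGame k : PG) := by
  cases k <;> exact PGame.zero_le.2 fun j => PEmpty.elim j

theorem zero_lf_natGame_succ (k : ℕ) : 0 ⧏ (natGame (k + 1) : PG) :=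
  PGame.zero_lf.2 ⟨PUnit.unit, natGame_nonneg k⟩

theorem signStable_natGame (k : ℕ) : SignStable (natGame k) := by
  induction k with
  | zero =>
    exact .intro (fun i => i.elim) (fun j => j.elim) (.inl (natGame_nonneg 0)) (fun _ j => j.elim)
      (fun _ j => j.elim)
  | succ k ih =>
    exact .intro (fun _ => ih) (fun j => j.elim) (.inl (natGame_nonneg _)) (fun _ j => j.elim)
      (fun h => absurd h (PGame.not_le.2 (zero_lf_natGame_succ k)))

theorem intGame_sign (m : ℤ) :
    (0 ≤ m → 0 ≤ intGame m) ∧ (0 < m → 0 ⧏ intGame m) ∧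
      (m ≤ 0 → intGame m ≤ 0) ∧ (m < 0 → intGame m ⧏ 0) := by
  unfold intGame
  split_ifs with h
  · refine ⟨fun _ => natGame_nonneg _, fun hm => ?_, fun hm => ?_, fun hm => absurd h (by omega)⟩
    · obtain ⟨k, hk⟩ : ∃ k, m.toNat = k + 1 := ⟨m.toNat - 1, by omega⟩
      rw [hk]
      exact zero_lf_natGame_succ k
    · rw [show m.toNat = 0 by omega]
      exact PGame.le_zero.2 fun i => i.elim
  · obtain ⟨k, hk⟩ : ∃ k, (-m).toNat = k + 1 := ⟨(-m).toNat - 1, by omega⟩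
    rw [hk]
    exact ⟨fun hm => absurd hm h, fun hm => absurd hm.le h,
      fun _ => neg_le_zero_iff.2 (natGame_nonneg _),
      fun _ => neg_lf_zero_iff.2 (zero_lf_natGame_succ k)⟩

theorem dGame_sign (n : ℕ) (m : ℤ) :
    (0 ≤ m → 0 ≤ dGame n m) ∧ (0 < m → 0 ⧏ dGame n m) ∧
      (m ≤ 0 → dGame n m ≤ 0) ∧ (m < 0 → dGame n m ⧏ 0) := by
  induction n generalizing m with
  | zero => rw [dGame]; exact intGame_sign m
  | succ n ih =>
    rw [dGame]
    split_ifs with h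
    · obtain ⟨h₁, h₂, h₃, h₄⟩ := ih (m / 2)
      exact ⟨fun _ => h₁ (by omega), fun _ => h₂ (by omega), fun _ => h₃ (by omega),
        fun _ => h₄ (by omega)⟩
    · rcases lt_or_gt_of_ne (show m ≠ 0 by omega) with hm | hm
      · refine ⟨fun h => absurd h (by omega), fun h => absurd h (by omega), fun _ => ?_,
          fun _ => ?_⟩
        · exact PGame.le_zero.2 fun _ => (ih _).2.2.2 (by omega)
        · exact PGame.lf_zero.2 ⟨PUnit.unit, (ih _).2.2.1 (by omega)⟩
      · refine ⟨fun _ => ?_, fun _ => ?_, fun h => absurd h (by omega),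
          fun h => absurd h (by omega)⟩
        · exact PGame.zero_le.2 fun _ => (ih _).2.1 (by omega)
        · exact PGame.zero_lf.2 ⟨PUnit.unit, (ih _).1 (by omega)⟩

theorem signStable_dGame (n : ℕ) (m : ℤ) : SignStable (dGame n m) := by
  induction n generalizing m with
  | zero =>
    rw [dGame, intGame]
    split_ifs
    exacts [signStable_natGame _, (signStable_natGame _).neg]
  | succ n ih =>
    have hs := dGame_sign (n + 1) m
    rw [dGame] at hs ⊢
    split_ifs at hs ⊢ with h
    · exact ih _
    · rcases lt_or_gt_of_ne (show m ≠ 0 by omega) with hm | hm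
      · exact .intro (fun _ => ih _) (fun _ => ih _) (.inr (hs.2.2.1 hm.le))
          (fun hx => absurd (hs.2.2.2 hm) (PGame.not_lf.2 hx))
          (fun _ _ => (dGame_sign n _).2.2.2 (by omega))
      · exact .intro (fun _ => ih _) (fun _ => ih _) (.inl (hs.1 hm.le))
          (fun _ _ => (dGame_sign n _).2.1 (by omega))
          (fun hx => absurd (hs.2.1 hm) (PGame.not_lf.2 hx))

/-- Sums of sprigs `*:d` with `P d`; a summand `0` is a sprig that has been killed. -/
inductive SprigSum (P : PG → Prop) : PG → Prop
  | nil : SprigSum P 0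
  | cons_zero {G : PG} : SprigSum P G → SprigSum P (0 + G)
  | cons {d G : PG} : P d → SprigSum P G → SprigSum P (ordSum ⋆ d + G)

namespace SprigSum

variable {P : PG → Prop}

theorem moveLeft (hP : ∀ d, P d → ∀ i, P (d.moveLeft i)) {G : PG} (hG : SprigSum P G) :
    ∀ i, SprigSum P (G.moveLeft i) := by
  induction hG with
  | nil => exact fun i => i.elim
  | cons_zero _ ih => exact (forall_leftMoves_add _).2 ⟨fun i => i.elim, fun j => cons_zero (ih j)⟩
  | cons hd hG ih =>
    refine (forall_leftMoves_add _).2 ⟨(forall_leftMoves_ordSum_star (SprigSum P <| · + _)).2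
      ⟨cons_zero hG, fun i => cons (hP _ hd i) hG⟩, fun j => cons hd (ih j)⟩

theorem moveRight (hP : ∀ d, P d → ∀ j, P (d.moveRight j)) {G : PG} (hG : SprigSum P G) :
    ∀ j, SprigSum P (G.moveRight j) := by
  induction hG with
  | nil => exact fun j => j.elim
  | cons_zero _ ih => exact (forall_rightMoves_add _).2 ⟨fun j => j.elim, fun j => cons_zero (ih j)⟩
  | cons hd hG ih =>
    refine (forall_rightMoves_add _).2 ⟨(forall_rightMoves_ordSum_star (SprigSum P <| · + _)).2
      ⟨cons_zero hG, fun j => cons (hP _ hd j) hG⟩, fun j => cons hd (ih j)⟩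

theorem neg (hP : ∀ d, P d → P (-d)) {G : PG} (hG : SprigSum P G) : SprigSum P (-G) := by
  induction hG with
  | nil => rw [neg_zero]; exact nil
  | cons_zero _ ih => rw [PGame.neg_add, neg_zero]; exact cons_zero ih
  | cons hd _ ih => rw [PGame.neg_add, neg_ordSum_star]; exact cons (hP _ hd) ih

theorem zero_le_of_isEmpty {G : PG} (hG : SprigSum P G) (h : IsEmpty G.LeftMoves) : 0 ≤ G := by
  induction hG with
  | nil => exact le_rfl
  | cons_zero _ ih => exact (le_congr_right (zero_add_equiv _)).2 (ih (isEmpty_leftMoves_add.1 h).2)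
  | cons =>
    obtain ⟨k, -⟩ := (exists_leftMoves_ordSum_star fun _ => True).2 (Or.inl trivial)
    exact ((isEmpty_leftMoves_add.1 h).1.false k).elim

-- Killing a sprig `*:d` with `d ≤ 0` costs Left at most a `⋆`.
theorem exists_add_star_le_moveLeft_or_pos {G : PG} (hG : SprigSum SignStable G) :
    (∃ i, G + ⋆ ≤ G.moveLeft i) ∨ SprigSum (fun d => SignStable d ∧ 0 < d) G := by
  induction hG with
  | nil => exact .inr nil
  | cons_zero _ ih =>
    refine ih.imp (fun ⟨i, hi⟩ => (exists_leftMoves_add _).2 (.inr ⟨i, ?_⟩)) cons_zero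
    simpa only [le_iff_game_le, quot_add, quot_zero, zero_add] using hi
  | @cons d G hd _ ih =>
    rcases ih with ⟨i, hi⟩ | hpos
    · refine .inl ((exists_leftMoves_add _).2 (.inr ⟨i, ?_⟩))
      simp only [le_iff_game_le, quot_add] at hi ⊢
      rw [add_assoc]
      gcongr
    · by_cases hd0 : d ≤ 0
      · refine .inl ((exists_leftMoves_add _).2 (.inl ?_))
        refine (exists_leftMoves_ordSum_star (ordSum ⋆ d + G + ⋆ ≤ · + G)).2 (.inl ?_)
        have := le_iff_game_le.1 (ordSum_star_add_star_le_zero hd hd0)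
        simp only [le_iff_game_le, quot_add, quot_zero] at this ⊢
        calc _ = ⟦ordSum ⋆ d⟧ + ⟦⋆⟧ + ⟦G⟧ := by abel
          _ ≤ _ := by gcongr
      · exact .inr (cons ⟨hd, lt_iff_le_and_lf.2
          ⟨hd.total.resolve_right hd0, PGame.not_le.1 hd0⟩⟩ hpos)

-- The parity of the number of sprigs decides which of the two holds.
theorem zero_le_or_zero_le_add_star {G : PG} (hG : SprigSum (fun d => SignStable d ∧ 0 < d) G) :
    0 ≤ G ∨ 0 ≤ G + ⋆ := by
  induction hG with
  | nil => exact .inl le_rfl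
  | cons_zero _ ih => simpa only [le_iff_game_le, quot_add, quot_zero, zero_add] using ih
  | @cons d G hd _ ih =>
    have hs := le_iff_game_le.1 (zero_le_ordSum_star_add_star hd.1 hd.2.le)
    simp only [le_iff_game_le, quot_add] at hs ih ⊢
    rcases ih with h | h
    · refine .inr ?_
      calc (0 : Game) ≤ ⟦ordSum ⋆ d⟧ + ⟦⋆⟧ + ⟦G⟧ := add_nonneg hs h
        _ = _ := by abel
    · refine .inl ?_
      calc (0 : Game) ≤ ⟦ordSum ⋆ d⟧ + ⟦⋆⟧ + (⟦G⟧ + ⟦⋆⟧) := add_nonneg hs h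
        _ = ⟦ordSum ⋆ d⟧ + ⟦G⟧ + (⟦⋆⟧ + ⟦⋆⟧) := by abel
        _ = _ := by rw [quot_star_add_star, add_zero]

-- Left kills a sprig if the others have `G' + ⋆ ≥ 0`, and otherwise moves `*:d` to `*:d^L` with
-- `d^L ≥ 0`.
theorem isEmpty_or_exists_zero_le_moveLeft_add_star {G : PG}
    (hG : SprigSum (fun d => SignStable d ∧ 0 < d) G) :
    IsEmpty G.LeftMoves ∨ ∃ i, 0 ≤ G.moveLeft i + ⋆ := by
  induction hG with
  | nil => exact .inl inferInstance
  | cons_zero _ ih =>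
    refine ih.imp (fun h => isEmpty_leftMoves_add.2 ⟨inferInstance, h⟩)
      fun ⟨i, hi⟩ => (exists_leftMoves_add fun z => 0 ≤ z + ⋆).2 (.inr ⟨i, ?_⟩)
    simpa only [le_iff_game_le, quot_add, quot_zero, zero_add] using hi
  | @cons d G hd hG _ =>
    refine .inr ((exists_leftMoves_add fun z => 0 ≤ z + ⋆).2 (.inl ?_))
    rcases zero_le_or_zero_le_add_star hG with h | h
    · obtain ⟨i, hi⟩ := PGame.zero_lf.1 (lt_iff_le_and_lf.1 hd.2).2
      refine (exists_leftMoves_ordSum_star fun z => 0 ≤ z + G + ⋆).2 (.inr ⟨i, ?_⟩)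
      have hs := zero_le_ordSum_star_add_star (hd.1.moveLeft i) hi
      simp only [le_iff_game_le, quot_add] at hs h ⊢
      calc (0 : Game) ≤ ⟦ordSum ⋆ (d.moveLeft i)⟧ + ⟦⋆⟧ + ⟦G⟧ := add_nonneg hs h
        _ = _ := by abel
    · refine (exists_leftMoves_ordSum_star fun z => 0 ≤ z + G + ⋆).2 (.inl ?_)
      simpa only [le_iff_game_le, quot_add, quot_zero, zero_add] using h

theorem exists_zero_le_moveLeft_add_star {G : PG} (hG : SprigSum SignStable G) (h : 0 ≤ G) :
    IsEmpty G.LeftMoves ∨ ∃ i, 0 ≤ G.moveLeft i + ⋆ := by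
  refine (exists_add_star_le_moveLeft_or_pos hG).elim (fun ⟨i, hi⟩ => .inr ⟨i, ?_⟩)
    isEmpty_or_exists_zero_le_moveLeft_add_star
  simp only [le_iff_game_le, quot_add] at h hi ⊢
  calc (0 : Game) ≤ ⟦G⟧ + (⟦⋆⟧ + ⟦⋆⟧) := by rwa [quot_star_add_star, add_zero]
    _ = ⟦G⟧ + ⟦⋆⟧ + ⟦⋆⟧ := by abel
    _ ≤ _ := by gcongr

end SprigSum

theorem starShiftClass_sprigSum : StarShiftClass (SprigSum SignStable) where
  moveLeft_mem _ hG := hG.moveLeft fun _ hd => hd.moveLeft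
  moveRight_mem _ hG := hG.moveRight fun _ hd => hd.moveRight
  neg_mem _ hG := hG.neg fun _ hd => hd.neg
  zero_le_of_isEmpty _ hG := hG.zero_le_of_isEmpty
  exists_zero_le_moveLeft_add_star _ hG := hG.exists_zero_le_moveLeft_add_star

theorem SumOfStarBased.sprigSum {G : PG} (hG : SumOfStarBased G) : SprigSum SignStable G := by
  induction hG with
  | zero => exact .nil
  | addPos _ _ ih => exact .cons (signStable_dGame _ _) ih
  | addNeg _ _ ih => exact .cons (signStable_dGame _ _).neg ih

theorem outcomeOf_congr {a a' b b' : Prop} (ha : a ↔ a') (hb : b ↔ b') :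
    outcomeOf a b = outcomeOf a' b' := by
  rw [propext ha, propext hb]

/-- For a finite sum `G` of star-based numbers, `o⁺(G) = o⁻(G + *)` and
`o⁺(G + *) = o⁻(G)`. -/
theorem stmt14 (G : PG) (hG : SumOfStarBased G) :
    no G = mo (G + PGame.star) ∧ no (G + PGame.star) = mo G := by
  have hS := hG.sprigSum
  obtain ⟨hm₁, hm₂⟩ := starShiftClass_sprigSum.mw_iff G hS
  obtain ⟨hs₁, hs₂⟩ := starShiftClass_sprigSum.mw_add_star_iff G hS
  obtain ⟨hn₁, hn₂⟩ := nw_iff G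
  obtain ⟨hns₁, hns₂⟩ := nw_iff (G + ⋆)
  exact ⟨outcomeOf_congr (hn₁.trans hs₁.symm) (hn₂.trans hs₂.symm),
    outcomeOf_congr (hns₁.trans hm₁.symm) (hns₂.trans hm₂.symm)⟩

end Sprigs
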